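/- arXiv:1505.06941 — 2 statements merged into one kernel-verified Lean document; each statement's English description precedes it below -/
import Mathlib

section
/- Let C be a category admitting finite colimits and let X : Δ → C be a 1-Segal cosimplicial object. Then X is a unital 2-Segal cosimplicial object; that is, for every polygonal subdivision 0 ≤ i < j ≤ n the 2-Segal square of X is a pushout square in C, and for every 0 ≤ k < n the unitality square of X is a pushout square in C. -/
/-!
Let `F : [i + m] → [i + n]` be the identity on `{0,…,i}` and act as `f : [m] → [n]` on
`{i,…,i+m}` (so `f 0 = 0`). By 1-Segality `X[i+m]` and `X[i+n]` are both obtained from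
`X{0,…,i}` by gluing along `X{i}`, with `X[m]` resp. `X[n]` as the other piece, and `X(F)` is the
identity on the common piece; cancelling the 1-Segal square of `X[i+m]` from that of `X[i+n]`
shows that `X(F)` is the cobase change of `X(f)`. The mirror statement holds for maps that are
the identity on a final segment.

The inclusion `{0,…,i,j,…,n} ↪ [n]` is `{i,j} ↪ {i,…,j}` extended by identities on both sides,
and the collapse `[n] → [n-1]` is `{k,k+1} → {k}` extended in the same way, so pasting the two
cobase-change squares gives the 2-Segal and the unitality squares.
-/

open CategoryTheory CategoryTheory.Limits Simplicial

namespace Stmt0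

/-- The inclusion `{a, a+1, …, a+m} ⊆ {0,…,n}`, as a map `[m] ⟶ [n]`, `t ↦ a + t`. -/
def interval (a m n : ℕ) (h : a + m ≤ n) : (⦋m⦌ : SimplexCategory) ⟶ ⦋n⦌ :=
  SimplexCategory.mkHom
    { toFun := fun t => ⟨a + t.1, by have := t.isLt; omega⟩
      monotone' := by
        intro s t hst
        have h2 : s.1 ≤ t.1 := hst
        simp only [Fin.mk_le_mk]
        omega }

/-- The inclusion of the two endpoints `{0, m} ⊆ {0,…,m}`, as a map `[1] ⟶ [m]`. -/
def twoEnds (m : ℕ) : (⦋1⦌ : SimplexCategory) ⟶ ⦋m⦌ :=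
  SimplexCategory.mkHom
    { toFun := fun t => ⟨if t.1 = 0 then 0 else m, by split <;> omega⟩
      monotone' := by
        intro s t hst
        have h2 : s.1 ≤ t.1 := hst
        simp only [Fin.mk_le_mk]
        split <;> split <;> omega }

/-- The inclusion `{0,…,i,j,…,n} ⊆ {0,…,n}`, as a map `[n-j+i+1] ⟶ [n]`
(identifying `{0,…,i,j,…,n}` with a standard ordinal). -/
def gapInclusion (i j n : ℕ) (hij : i + 2 ≤ j) (hj : j ≤ n) :
    (⦋n - j + i + 1⦌ : SimplexCategory) ⟶ ⦋n⦌ :=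
  SimplexCategory.mkHom
    { toFun := fun t =>
        ⟨if t.1 ≤ i then t.1 else t.1 + (j - i - 1), by have := t.isLt; split <;> omega⟩
      monotone' := by
        intro s t hst
        have h2 : s.1 ≤ t.1 := hst
        simp only [Fin.mk_le_mk]
        split <;> split <;> omega }

/-- The monotone surjection `{0,…,n} → {0,…,k,k+2,…,n}` identifying `k+1` with `k`,
as a map `[n] ⟶ [n-1]`. -/
def collapse (k n : ℕ) (hk : k < n) : (⦋n⦌ : SimplexCategory) ⟶ ⦋n - 1⦌ :=
  SimplexCategory.mkHom
    { toFun := fun t =>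
        ⟨if t.1 ≤ k then t.1 else t.1 - 1, by have := t.isLt; split <;> omega⟩
      monotone' := by
        intro s t hst
        have h2 : s.1 ≤ t.1 := hst
        simp only [Fin.mk_le_mk]
        split <;> split <;> omega }

/-- The unique map `[m] ⟶ [0]`. -/
def toPoint (m : ℕ) : (⦋m⦌ : SimplexCategory) ⟶ ⦋0⦌ :=
  SimplexCategory.mkHom ⟨fun _ => 0, monotone_const⟩

lemma hom_ext_of_val {m n : ℕ} {f g : (⦋m⦌ : SimplexCategory) ⟶ ⦋n⦌}
    (h : ∀ t : Fin (m + 1), (f.toOrderHom t : ℕ) = g.toOrderHom t) : f = g :=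
  SimplexCategory.Hom.ext _ _ (OrderHom.ext _ _ (funext fun t => Fin.ext (h t)))

@[simp]
lemma interval_apply (a m n : ℕ) (h : a + m ≤ n) (t : Fin (m + 1)) :
    ((interval a m n h).toOrderHom t : ℕ) = a + t := rfl

@[simp]
lemma twoEnds_apply (m : ℕ) (t : Fin 2) :
    ((twoEnds m).toOrderHom t : ℕ) = if (t : ℕ) = 0 then 0 else m := rfl

@[simp]
lemma gapInclusion_apply (i j n : ℕ) (hij : i + 2 ≤ j) (hj : j ≤ n)
    (t : Fin (n - j + i + 1 + 1)) :
    ((gapInclusion i j n hij hj).toOrderHom t : ℕ) =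
      if (t : ℕ) ≤ i then (t : ℕ) else t + (j - i - 1) := rfl

@[simp]
lemma collapse_apply (k n : ℕ) (hk : k < n) (t : Fin (n + 1)) :
    ((collapse k n hk).toOrderHom t : ℕ) = if (t : ℕ) ≤ k then (t : ℕ) else t - 1 := rfl

@[simp]
lemma toPoint_apply (m : ℕ) (t : Fin (m + 1)) : ((toPoint m).toOrderHom t : ℕ) = 0 := rfl

lemma interval_comp {a b m n p : ℕ} (h : a + m ≤ n) (h' : b + n ≤ p) :
    interval a m n h ≫ interval b n p h' = interval (b + a) m p (by omega) :=
  hom_ext_of_val fun t => by simp; omega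

lemma interval_zero_self (n : ℕ) : interval 0 n n (by omega) = 𝟙 ⦋n⦌ :=
  hom_ext_of_val fun t => by simp

instance (a m n : ℕ) (h : a + m ≤ n) : Mono (interval a m n h) :=
  SimplexCategory.mono_iff_injective.2 fun s t hst =>
    Fin.ext (by simpa using congrArg Fin.val hst)

variable {C : Type*} [Category C]

def IsOneSegal (X : SimplexCategory ⥤ C) : Prop :=
  ∀ (k n : ℕ) (_ : 0 < k) (_ : k < n),
    IsPushout
      (X.map (interval 0 0 (n - k) (by omega)))
      (X.map (interval k 0 k (by omega)))
      (X.map (interval k (n - k) n (by omega)))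
      (X.map (interval 0 k n (by omega)))

namespace IsOneSegal

variable {X : SimplexCategory ⥤ C}

lemma isPushout_interval (hX : IsOneSegal X) (k e n : ℕ) (hn : k + e = n) :
    IsPushout
      (X.map (interval 0 0 e (by omega)))
      (X.map (interval k 0 k (by omega)))
      (X.map (interval k e n (by omega)))
      (X.map (interval 0 k n (by omega))) := by
  rcases Nat.eq_zero_or_pos k with rfl | hk
  · obtain rfl : e = n := by omega
    rw [interval_zero_self, interval_zero_self, X.map_id, X.map_id]
    exact IsPushout.id_vert _
  rcases Nat.eq_zero_or_pos e with rfl | he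
  · obtain rfl : k = n := by omega
    rw [interval_zero_self, interval_zero_self, X.map_id, X.map_id]
    exact IsPushout.id_horiz _
  obtain rfl : e = n - k := by omega
  exact hX k n hk (by omega)

lemma isPushout_extendLeft (hX : IsOneSegal X) {i m n m' n' : ℕ}
    (hm : i + m = m') (hn : i + n = n')
    (f : ⦋m⦌ ⟶ ⦋n⦌) (F : ⦋m'⦌ ⟶ ⦋n'⦌)
    (hF₀ : interval 0 i m' (by omega) ≫ F = interval 0 i n' (by omega))
    (hF : interval i m m' (by omega) ≫ F = f ≫ interval i n n' (by omega)) :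
    IsPushout (X.map (interval i m m' (by omega))) (X.map f) (X.map F)
      (X.map (interval i n n' (by omega))) := by
  have hf₀ : interval 0 0 m (by omega) ≫ f = interval 0 0 n (by omega) := by
    have hpt : interval 0 0 m (by omega) ≫ interval i m m' (by omega) =
        interval i 0 i (by omega) ≫ interval 0 i m' (by omega) :=
      hom_ext_of_val fun t => by simp
    rw [← cancel_mono (interval i n n' (by omega)), Category.assoc, ← hF, reassoc_of% hpt, hF₀]
    exact hom_ext_of_val fun t => by simp
  refine IsPushout.of_top ?_ (by rw [← X.map_comp, ← X.map_comp, hF])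
    (hX.isPushout_interval i m m' hm).flip
  rw [← X.map_comp, ← X.map_comp, hf₀, hF₀]
  exact (hX.isPushout_interval i n n' hn).flip

lemma isPushout_extendRight (hX : IsOneSegal X) {m n e m' n' : ℕ}
    (hm : m + e = m') (hn : n + e = n')
    (f : ⦋m⦌ ⟶ ⦋n⦌) (F : ⦋m'⦌ ⟶ ⦋n'⦌)
    (hF₀ : interval m e m' (by omega) ≫ F = interval n e n' (by omega))
    (hF : interval 0 m m' (by omega) ≫ F = f ≫ interval 0 n n' (by omega)) :
    IsPushout (X.map (interval 0 m m' (by omega))) (X.map f) (X.map F)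
      (X.map (interval 0 n n' (by omega))) := by
  have hf₀ : interval m 0 m (by omega) ≫ f = interval n 0 n (by omega) := by
    have hpt : interval m 0 m (by omega) ≫ interval 0 m m' (by omega) =
        interval 0 0 e (by omega) ≫ interval m e m' (by omega) :=
      hom_ext_of_val fun t => by simp
    rw [← cancel_mono (interval 0 n n' (by omega)), Category.assoc, ← hF, reassoc_of% hpt, hF₀]
    exact hom_ext_of_val fun t => by simp
  refine IsPushout.of_top ?_ (by rw [← X.map_comp, ← X.map_comp, hF])
    (hX.isPushout_interval m e m' hm)
  rw [← X.map_comp, ← X.map_comp, hf₀, hF₀]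
  exact hX.isPushout_interval n e n' hn

lemma isPushout_twoSegal (hX : IsOneSegal X) (i j n : ℕ) (hij : i + 2 ≤ j) (hjn : j ≤ n) :
    IsPushout (X.map (twoEnds (j - i))) (X.map (interval i 1 (n - j + i + 1) (by omega)))
      (X.map (interval i (j - i) n (by omega))) (X.map (gapInclusion i j n hij hjn)) := by
  have hExtRight := hX.isPushout_extendRight (e := n - j) (by omega) (by omega) (twoEnds (j - i))
    (gapInclusion 0 (j - i) (n - i) (by omega) (by omega))
    (hom_ext_of_val fun t => by simp; grind)
    (hom_ext_of_val fun t => by simp; grind)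
  have hExtLeft := hX.isPushout_extendLeft (i := i) (by omega) (by omega)
    (gapInclusion 0 (j - i) (n - i) (by omega) (by omega)) (gapInclusion i j n hij hjn)
    (hom_ext_of_val fun t => by simp; grind)
    (hom_ext_of_val fun t => by simp; grind)
  have h := (hExtRight.paste_horiz hExtLeft).flip
  rwa [← X.map_comp, ← X.map_comp, interval_comp, interval_comp] at h

lemma isPushout_unitality (hX : IsOneSegal X) (k n : ℕ) (hk : k < n) :
    IsPushout (X.map (interval k 1 n (by omega))) (X.map (toPoint 1))
      (X.map (collapse k n hk)) (X.map (interval k 0 (n - 1) (by omega))) := by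
  have hExtRight := hX.isPushout_extendRight (e := n - k - 1) (by omega) (by omega) (toPoint 1)
    (collapse 0 (n - k) (by omega))
    (hom_ext_of_val fun t => by simp)
    (hom_ext_of_val fun t => by simp; grind)
  have hExtLeft := hX.isPushout_extendLeft (i := k) (by omega) (by omega)
    (collapse 0 (n - k) (by omega)) (collapse k n hk)
    (hom_ext_of_val fun t => by simp; grind)
    (hom_ext_of_val fun t => by simp; grind)
  have h := hExtRight.paste_horiz hExtLeft
  rwa [← X.map_comp, ← X.map_comp, interval_comp, interval_comp] at h

end IsOneSegal

end Stmt0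

open Stmt0 in
theorem stmt_0 {C : Type*} [Category C]
    (X : SimplexCategory ⥤ C)
    -- X is 1-Segal: for 0 < k < n the square
    --   X({k}) → X({k,…,n}), X({k}) → X({0,…,k}), both mapping to X({0,…,n})
    -- is a pushout.
    (h1Segal : ∀ (n k : ℕ) (_ : 0 < k) (_ : k < n),
      IsPushout
        (X.map (interval 0 0 (n - k) (by omega)))       -- {k} ↪ {k,…,n}
        (X.map (interval k 0 k (by omega)))             -- {k} ↪ {0,…,k}
        (X.map (interval k (n - k) n (by omega)))       -- {k,…,n} ↪ {0,…,n}
        (X.map (interval 0 k n (by omega)))) :          -- {0,…,k} ↪ {0,…,n}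
    -- X is 2-Segal: for every polygonal subdivision 0 ≤ i < j ≤ n the square
    --   X({i,j}) → X({i,…,j}), X({i,j}) → X({0,…,i,j,…,n}), both mapping to X({0,…,n})
    -- is a pushout;
    (∀ (n i j : ℕ) (_ : 3 ≤ n) (_ : i + 2 ≤ j) (_ : j ≤ n) (_ : ¬(i = 0 ∧ j = n)),
      IsPushout
        (X.map (twoEnds (j - i)))                              -- {i,j} ↪ {i,…,j}
        (X.map (interval i 1 (n - j + i + 1) (by omega)))      -- {i,j} ↪ {0,…,i,j,…,n}
        (X.map (interval i (j - i) n (by omega)))              -- {i,…,j} ↪ {0,…,n}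
        (X.map (gapInclusion i j n (by omega) (by omega))))    -- {0,…,i,j,…,n} ↪ {0,…,n}
    ∧
    -- and X is unital: for every 0 ≤ k < n the unitality square
    --   X({k,k+1}) → X({0,…,n}), X({k,k+1}) → X({k}),
    --   X({0,…,n}) → X({0,…,k,k+2,…,n}), X({k}) → X({0,…,k,k+2,…,n})
    -- is a pushout.
    (∀ (n k : ℕ) (_ : k < n),
      IsPushout
        (X.map (interval k 1 n (by omega)))         -- {k,k+1} ↪ {0,…,n}
        (X.map (toPoint 1))                         -- {k,k+1} → {k}
        (X.map (collapse k n (by omega)))           -- {0,…,n} → {0,…,k,k+2,…,n}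
        (X.map (interval k 0 (n - 1) (by omega)))) := by  -- {k} ↪ {0,…,k,k+2,…,n}
  have hX : IsOneSegal X := fun k n hk hkn => h1Segal n k hk hkn
  exact ⟨fun n i j _ hij hjn _ => hX.isPushout_twoSegal i j n hij hjn,
    fun n k hk => hX.isPushout_unitality k n hk⟩
end

section
/- Let f : J → J' be a map of finite nonempty sets, suppose J' carries a cyclic order and every fiber of f carries a linear order. Then the lexicographic successor map on J generates a transitive ℤ-action on J; that is, the lexicographic construction defines a cyclic order on J. -/
/-!
STATEMENT 2: Let `f : J → J'` be a map of finite nonempty sets, suppose `J'` carries a cyclic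
order (a transitive `ℤ`-action, encoded by its generating permutation `σ` together with
transitivity of its iterates) and every fiber of `f` carries a linear order (encoded by a
linear order on `J`, restricted to comparisons within fibers).  Then the lexicographic
successor map `s` on `J` — characterized below: if `j` is not maximal in its fiber then `s j`
is the least element of the fiber above `j`; otherwise `s j` is the minimal element of the
successor nonempty fiber (skipping empty fibers) — generates a transitive `ℤ`-action on `J`,
i.e. `s` is a bijection whose iterates act transitively.
-/

theorem stmt_2 (J J' : Type*) [Fintype J] [Nonempty J] [LinearOrder J]
    (f : J → J')
    -- cyclic order on J' : transitive ℤ-action generated by the permutation σ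
    (σ : Equiv.Perm J') (hσ : ∀ a b : J', ∃ k : ℕ, (σ ^ k) a = b)
    -- s is the lexicographic successor map:
    (s : J → J)
    (hs : ∀ j : J,
      -- if j is not maximal in its fiber, s j is its successor inside the fiber,
      ((∃ x, f x = f j ∧ j < x) →
        (f (s j) = f j ∧ j < s j ∧ ∀ x, f x = f j → j < x → s j ≤ x)) ∧
      -- otherwise s j is the minimal element of the next nonempty fiber
      ((¬ ∃ x, f x = f j ∧ j < x) →
        ((∀ x, f x = f (s j) → s j ≤ x) ∧
         ∃ k : ℕ, 0 < k ∧ f (s j) = (σ ^ k) (f j) ∧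
           ∀ m : ℕ, 0 < m → m < k → ∀ x, f x ≠ (σ ^ m) (f j)))) :
    Function.Bijective s ∧ ∀ a b : J, ∃ k : ℕ, s^[k] a = b := by

  classical
  -- `R a b` : `b` is reachable from `a` by iterating `s`
  set R : J → J → Prop := fun a b => ∃ k : ℕ, s^[k] a = b with hR
  have Rrefl : ∀ a, R a a := fun a => ⟨0, rfl⟩
  have Rstep : ∀ a, R a (s a) := fun a => ⟨1, rfl⟩
  have Rtrans : ∀ a b c, R a b → R b c → R a c := by
    rintro a b c ⟨k, rfl⟩ ⟨l, rfl⟩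
    exact ⟨l + k, Function.iterate_add_apply s l k a⟩
  -- Claim 1: within a fiber, reachability goes upward
  have claim1 : ∀ N : ℕ, ∀ a b : J, f a = f b → a ≤ b →
      (Finset.univ.filter (fun x => a < x)).card ≤ N → R a b := by
    intro N
    induction N with
    | zero =>
      intro a b hf hab hcard
      rcases eq_or_lt_of_le hab with h | h
      · exact h ▸ Rrefl a
      · exfalso
        have : b ∈ Finset.univ.filter (fun x => a < x) := by
          simp [h]
        have := Finset.card_pos.mpr ⟨b, this⟩
        omega
    | succ n ih =>
      intro a b hf hab hcard
      rcases eq_or_lt_of_le hab with h | h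
      · exact h ▸ Rrefl a
      · obtain ⟨hf1, hlt1, hle1⟩ := (hs a).1 ⟨b, hf.symm, h⟩
        have hsb : s a ≤ b := hle1 b hf.symm h
        have hsub : Finset.univ.filter (fun x => s a < x) ⊆
            (Finset.univ.filter (fun x => a < x)).erase (s a) := by
          intro x hx
          simp only [Finset.mem_filter, Finset.mem_univ, true_and,
            Finset.mem_erase] at hx ⊢
          exact ⟨(ne_of_lt hx).symm, lt_trans hlt1 hx⟩
        have hcard' : (Finset.univ.filter (fun x => s a < x)).card ≤ n := by
          have h1 := Finset.card_le_card hsub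
          have h2 : ((Finset.univ.filter (fun x => a < x)).erase (s a)).card <
              (Finset.univ.filter (fun x => a < x)).card := by
            apply Finset.card_erase_lt_of_mem
            simp [hlt1]
          omega
        exact Rtrans a (s a) b (Rstep a)
          (ih (s a) b (hf1.trans hf) hsb hcard')
  have claim1' : ∀ a b : J, f a = f b → a ≤ b → R a b := fun a b hf hab =>
    claim1 _ a b hf hab le_rfl
  -- Lemma L: reach the minimum of the fiber `m` steps further along the cycle
  have L : ∀ m : ℕ, ∀ a b : J, 0 < m → f b = (σ ^ m) (f a) →
      (∀ x, f x = f b → b ≤ x) → R a b := by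
    intro m
    induction m using Nat.strong_induction_on with
    | _ m ih =>
      intro a b hm hfb hbmin
      have hfibne : (Finset.univ.filter (fun x => f x = f a)).Nonempty :=
        ⟨a, by simp⟩
      set j := (Finset.univ.filter (fun x => f x = f a)).max' hfibne with hj
      have hjmem := (Finset.univ.filter (fun x => f x = f a)).max'_mem hfibne
      have hjf : f j = f a := (Finset.mem_filter.mp hjmem).2
      have hjmax : ¬ ∃ x, f x = f j ∧ j < x := by
        rintro ⟨x, hx1, hx2⟩
        have : x ∈ Finset.univ.filter (fun y => f y = f a) := by
          simp [hx1.trans hjf]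
        exact absurd (Finset.le_max' _ x this) (not_le.mpr hx2)
      obtain ⟨hminsj, k, hk0, hfsj, hempt⟩ := (hs j).2 hjmax
      have haj : R a j := claim1' a j hjf.symm
        (Finset.le_max' _ a (by simp))
      have hkm : k ≤ m := by
        by_contra hkm
        exact hempt m hm (not_le.mp hkm) b (by rw [hfb, hjf])
      rcases eq_or_lt_of_le hkm with hkeq | hklt
      · -- s j = b
        have hfeq : f (s j) = f b := by
          rw [hfsj, hjf, hkeq, hfb]
        have : s j = b :=
          le_antisymm (hminsj b hfeq.symm) (hbmin (s j) hfeq)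
        exact Rtrans a j b haj (this ▸ Rstep j)
      · -- recurse
        have hfb' : f b = (σ ^ (m - k)) (f (s j)) := by
          rw [hfsj, hjf, ← Equiv.Perm.mul_apply, ← pow_add,
            Nat.sub_add_cancel hkm, hfb]
        exact Rtrans a (s j) b (Rtrans a j (s j) haj (Rstep j))
          (ih (m - k) (by omega) (s j) b (by omega) hfb' hbmin)
  -- transitivity
  have trans : ∀ a b : J, R a b := by
    intro a b
    -- find positive m with σ^m (f a) = f b
    obtain ⟨m0, hm0⟩ := hσ (f a) (f b)
    obtain ⟨q, hq⟩ := hσ (σ (f b)) (f b)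
    have hper : (σ ^ (q + 1)) (f b) = f b := by
      rw [pow_succ, Equiv.Perm.mul_apply, hq]
    obtain ⟨m, hmpos, hm⟩ : ∃ m : ℕ, 0 < m ∧ (σ ^ m) (f a) = f b := by
      rcases Nat.eq_zero_or_pos m0 with h0 | h0
      · subst h0
        simp only [pow_zero, Equiv.Perm.coe_one, id_eq] at hm0
        exact ⟨q + 1, Nat.succ_pos q, by rw [hm0, hper]⟩
      · exact ⟨m0, h0, hm0⟩
    have hfibne : (Finset.univ.filter (fun x => f x = f b)).Nonempty :=
      ⟨b, by simp⟩
    set b' := (Finset.univ.filter (fun x => f x = f b)).min' hfibne with hb'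
    have hb'mem := (Finset.univ.filter (fun x => f x = f b)).min'_mem hfibne
    have hb'f : f b' = f b := (Finset.mem_filter.mp hb'mem).2
    have hb'min : ∀ x, f x = f b' → b' ≤ x := by
      intro x hx
      exact Finset.min'_le _ x (by simp [hx.trans hb'f])
    have h1 : R a b' := L m a b' hmpos (by rw [hb'f, hm]) hb'min
    have h2 : R b' b := claim1' b' b hb'f
      (Finset.min'_le _ b (by simp))
    exact Rtrans a b' b h1 h2
  refine ⟨?_, trans⟩
  have hsurj : Function.Surjective s := by
    intro b
    obtain ⟨k, hk⟩ := trans (s b) b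
    cases k with
    | zero => exact ⟨b, hk⟩
    | succ n =>
      rw [Function.iterate_succ_apply'] at hk
      exact ⟨_, hk⟩
  exact (Finite.surjective_iff_bijective).mp hsurj
end
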